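/- arXiv:1511.01419 — 3 statements merged into one kernel-verified Lean document; each statement's English description precedes it below -/
import Mathlib

section
/- In a balanced binary pairwise model with a unique integral optimum, the LP relaxation is (α/2)-tight, where α > 0 is the gap between the best and second-best integral solution values. That is, the optimal integral value exceeds the value of any fractional (non-integral) vertex of the local polytope by at least α/2. -/
/-!
Let `z` be the integral optimum and `V` the supremum of the energy over the points of `𝕃` that
disagree with `z` at some node (`η_k = 1 - z_k`). Linearity of `F^k` gives
`F^k(1/2) = (F^k(z_k) + F^k(1 - z_k)) / 2 ≤ (m + V) / 2`, so every point of `𝕃` with a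
coordinate `1/2` has value at most `(m + V) / 2`.

By Krein–Milman, `V` is approached on vertices disagreeing with `z`, and these are
half-integral. For such a vertex with node marginals `x`, move the coordinates that disagree
with `z` to `1/2` and the coordinates equal to `1/2` to `z`. This gives a point `x'` with a
coordinate `1/2` and an integral `x'' ≠ z` with `2x + z = 2x' + x''`, and an edge-by-edge
comparison shows `2 Φ(x) + Φ(z) ≤ 2 Φ(x') + Φ(x'')`, where `Φ(x)` is the energy of
`completion θe x`, the best point of `𝕃` with node marginals `x`. Hence
`2 Φ(x) + m ≤ (m + V) + (m - α)`, so `V ≤ (V + m - α) / 2`, i.e. `V ≤ m - α`. A fractional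
vertex has a coordinate `1/2`, so its value is at most `(m + V) / 2 ≤ m - α / 2`.
-/

open Finset

section Convex

variable {E : Type*} [AddCommGroup E] [Module ℝ E]

theorem extremePoints_eq_empty_of_add_smul_mem {A : Set E} {d : E} (hd : d ≠ 0)
    (h : ∀ x ∈ A, ∀ t : ℝ, x + t • d ∈ A) : A.extremePoints ℝ = ∅ := by
  refine Set.eq_empty_of_forall_notMem fun x hx => hd ?_
  have hseg : x ∈ openSegment ℝ (x + (-1 : ℝ) • d) (x + (1 : ℝ) • d) :=
    ⟨1 / 2, 1 / 2, by norm_num, by norm_num, by norm_num, by module⟩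
  simpa using congrArg (· - x) (hx.2 (h x hx.1 (-1)) (h x hx.1 1) hseg)

theorem isExtreme_setOf_eq_of_le {A : Set E} (l : E →ₗ[ℝ] ℝ) {c : ℝ}
    (h : ∀ x ∈ A, l x ≤ c) : IsExtreme ℝ A {x ∈ A | l x = c} := by
  refine ⟨Set.sep_subset _ _, fun x₁ hx₁ x₂ hx₂ x hx hseg => ⟨hx₁, ?_⟩⟩
  obtain ⟨a, b, ha, hb, hab, rfl⟩ := hseg
  have hc : a * l x₁ + b * l x₂ = c := by simpa using hx.2
  have hsum : a * (c - l x₁) + b * (c - l x₂) = 0 := by linear_combination c * hab - hc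
  have h₁ : 0 ≤ c - l x₁ := sub_nonneg.2 (h x₁ hx₁)
  have h₂ : 0 ≤ b * (c - l x₂) := mul_nonneg hb.le (sub_nonneg.2 (h x₂ hx₂))
  nlinarith

theorem isExtreme_setOf_eq_of_ge {A : Set E} (l : E →ₗ[ℝ] ℝ) {c : ℝ}
    (h : ∀ x ∈ A, c ≤ l x) : IsExtreme ℝ A {x ∈ A | l x = c} := by
  simpa [neg_inj] using isExtreme_setOf_eq_of_le (-l) (c := -c) fun x hx => neg_le_neg (h x hx)

variable [TopologicalSpace E] [T2Space E] [IsTopologicalAddGroup E] [ContinuousSMul ℝ E]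
  [LocallyConvexSpace ℝ E]

theorem subset_of_extremePoints_subset {A C : Set E} (hA : IsCompact A) (hAc : Convex ℝ A)
    (hC : IsClosed C) (hCc : Convex ℝ C) (h : A.extremePoints ℝ ⊆ C) : A ⊆ C := by
  rw [← closure_convexHull_extremePoints hA hAc]
  exact closure_minimal (convexHull_min h hCc) hC

end Convex

theorem le_midpoint_of_sSup_slice_affine {X : Type*} {S : Set X} {f g : X → ℝ}
    {a b m V z : ℝ} (hlin : ∀ y ∈ Set.Icc (0 : ℝ) 1, sSup (f '' {x ∈ S | g x = y}) = a * y + b)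
    (hfm : ∀ x ∈ S, f x ≤ m) (hg : ∀ y ∈ Set.Icc (0 : ℝ) 1, ∃ x ∈ S, g x = y)
    (hz : z ∈ Set.Icc (0 : ℝ) 1) (hV : ∀ x ∈ S, g x = 1 - z → f x ≤ V)
    {x : X} (hx : x ∈ S) (hgx : g x = 1 / 2) : f x ≤ (m + V) / 2 := by
  have hbdd : ∀ y, BddAbove (f '' {x ∈ S | g x = y}) :=
    fun y => ⟨m, by rintro _ ⟨x, hx, rfl⟩; exact hfm x hx.1⟩
  have hne : ∀ y ∈ Set.Icc (0 : ℝ) 1, (f '' {x ∈ S | g x = y}).Nonempty := fun y hy =>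
    let ⟨x, hx, hgx⟩ := hg y hy; ⟨f x, x, ⟨hx, hgx⟩, rfl⟩
  have hz' : 1 - z ∈ Set.Icc (0 : ℝ) 1 := ⟨by linarith [hz.2], by linarith [hz.1]⟩
  have hzm : a * z + b ≤ m := hlin z hz ▸
    csSup_le (hne z hz) (by rintro _ ⟨y, hy, rfl⟩; exact hfm y hy.1)
  have hzV : a * (1 - z) + b ≤ V := hlin _ hz' ▸
    csSup_le (hne _ hz') (by rintro _ ⟨y, hy, rfl⟩; exact hV y hy.1 hy.2)
  have hx_le : f x ≤ a * (1 / 2) + b := hlin (1 / 2) ⟨by norm_num, by norm_num⟩ ▸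
    le_csSup (hbdd _) ⟨x, ⟨hx, hgx⟩, rfl⟩
  linarith

abbrev Marginals (n : ℕ) := (Fin n → ℝ) × (Fin n × Fin n → ℝ)

variable {n : ℕ}

def localPolytope (E : Finset (Fin n × Fin n)) : Set (Marginals n) :=
  {η | (∀ i, 0 ≤ η.1 i ∧ η.1 i ≤ 1) ∧
    ∀ e ∈ E, max 0 (η.1 e.1 + η.1 e.2 - 1) ≤ η.2 e ∧ η.2 e ≤ min (η.1 e.1) (η.1 e.2)}

def energy (E : Finset (Fin n × Fin n)) (θv : Fin n → ℝ) (θe : Fin n × Fin n → ℝ) :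
    Marginals n →ₗ[ℝ] ℝ where
  toFun η := (∑ i, θv i * η.1 i) + ∑ e ∈ E, θe e * η.2 e
  map_add' η ζ := by
    simp only [Prod.fst_add, Prod.snd_add, Pi.add_apply, mul_add, sum_add_distrib]
    ring
  map_smul' c η := by
    simp only [Prod.smul_fst, Prod.smul_snd, Pi.smul_apply, smul_eq_mul, RingHom.id_apply,
      mul_left_comm _ c, ← mul_sum, mul_add]

def nodeCoord (k : Fin n) : Marginals n →ₗ[ℝ] ℝ :=
  (LinearMap.proj k).comp (LinearMap.fst ℝ _ _)

theorem convex_localPolytope (E : Finset (Fin n × Fin n)) : Convex ℝ (localPolytope E) := by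
  rintro p ⟨hp₁, hp₂⟩ q ⟨hq₁, hq₂⟩ a b ha hb hab
  refine ⟨fun i => ?_, fun e he => ?_⟩
  · simp only [Prod.fst_add, Prod.smul_fst, Pi.add_apply, Pi.smul_apply, smul_eq_mul]
    constructor <;> nlinarith [hp₁ i, hq₁ i]
  · obtain ⟨hpl, hpu⟩ := hp₂ e he
    obtain ⟨hql, hqu⟩ := hq₂ e he
    simp only [max_le_iff, le_min_iff] at hpl hpu hql hqu
    simp only [Prod.fst_add, Prod.snd_add, Prod.smul_fst, Prod.smul_snd, Pi.add_apply,
      Pi.smul_apply, smul_eq_mul, max_le_iff, le_min_iff]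
    refine ⟨⟨?_, ?_⟩, ?_, ?_⟩ <;> nlinarith

theorem isCompact_localPolytope_univ :
    IsCompact (localPolytope (univ : Finset (Fin n × Fin n))) := by
  have hclosed : IsClosed (localPolytope (univ : Finset (Fin n × Fin n))) := by
    simp only [localPolytope, mem_univ, true_implies, Set.ofPred_and, Set.ofPred_forall]
    refine (isClosed_iInter fun i => ?_).inter (isClosed_iInter fun e => ?_) <;>
      exact (isClosed_le (by fun_prop) (by fun_prop)).inter
        (isClosed_le (by fun_prop) (by fun_prop))
  refine (isCompact_Icc (a := 0) (b := 1)).of_isClosed_subset hclosed fun η hη => ?_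
  have hedge : ∀ e, 0 ≤ η.2 e ∧ η.2 e ≤ 1 := fun e =>
    ⟨(le_max_left _ _).trans (hη.2 e (mem_univ e)).1,
      ((hη.2 e (mem_univ e)).2.trans (min_le_left _ _)).trans (hη.1 e.1).2⟩
  exact ⟨⟨fun i => (hη.1 i).1, fun e => (hedge e).1⟩,
    ⟨fun i => (hη.1 i).2, fun e => (hedge e).2⟩⟩

theorem isExtreme_localPolytope_slice (E : Finset (Fin n × Fin n)) (k : Fin n) {c : ℝ}
    (hc : c = 0 ∨ c = 1) :
    IsExtreme ℝ (localPolytope E) {η ∈ localPolytope E | η.1 k = c} := by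
  rcases hc with rfl | rfl
  · exact isExtreme_setOf_eq_of_ge (nodeCoord k) fun η hη => (hη.1 k).1
  · exact isExtreme_setOf_eq_of_le (nodeCoord k) fun η hη => (hη.1 k).2

theorem extremePoints_localPolytope_eq_empty {E : Finset (Fin n × Fin n)} (hE : E ≠ univ) :
    (localPolytope E).extremePoints ℝ = ∅ := by
  obtain ⟨e₀, he₀⟩ : ∃ e, e ∉ E := by
    by_contra! h
    exact hE (eq_univ_iff_forall.2 h)
  refine extremePoints_eq_empty_of_add_smul_mem (d := (0, Pi.single e₀ 1)) (by simp)
    fun η hη t => ⟨by simpa using hη.1, fun e he => ?_⟩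
  have hne : e ≠ e₀ := ne_of_mem_of_not_mem he he₀
  simpa [hne] using hη.2 e he

theorem max_zero_le_min {u v : ℝ} (hu : u ∈ Set.Icc (0 : ℝ) 1) (hv : v ∈ Set.Icc (0 : ℝ) 1) :
    max 0 (u + v - 1) ≤ min u v :=
  max_le (le_min hu.1 hv.1) (le_min (by linarith [hv.2]) (by linarith [hu.2]))

theorem max_zero_eq_min {u v : ℝ} (hu : u = 0 ∨ u = 1) (hv : v = 0 ∨ v = 1) :
    max 0 (u + v - 1) = min u v := by
  rcases hu with rfl | rfl <;> rcases hv with rfl | rfl <;> norm_num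

noncomputable def edgeArg (t u v : ℝ) : ℝ := if 0 ≤ t then min u v else max 0 (u + v - 1)

theorem edgeArg_mem_Icc (t : ℝ) {u v : ℝ} (hu : u ∈ Set.Icc (0 : ℝ) 1)
    (hv : v ∈ Set.Icc (0 : ℝ) 1) : edgeArg t u v ∈ Set.Icc (max 0 (u + v - 1)) (min u v) := by
  unfold edgeArg
  split_ifs
  exacts [⟨max_zero_le_min hu hv, le_rfl⟩, ⟨le_rfl, max_zero_le_min hu hv⟩]

theorem mul_le_mul_edgeArg {t u v y : ℝ} (hy : y ∈ Set.Icc (max 0 (u + v - 1)) (min u v)) :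
    t * y ≤ t * edgeArg t u v := by
  unfold edgeArg
  split_ifs with ht
  exacts [mul_le_mul_of_nonneg_left hy.2 ht, mul_le_mul_of_nonpos_left hy.1 (not_le.1 ht).le]

noncomputable def completion (θe : Fin n × Fin n → ℝ) (x : Fin n → ℝ) : Marginals n :=
  (x, fun e => edgeArg (θe e) (x e.1) (x e.2))

variable {θv : Fin n → ℝ} {θe : Fin n × Fin n → ℝ}

theorem completion_mem {x : Fin n → ℝ} (hx : ∀ i, x i ∈ Set.Icc (0 : ℝ) 1) :
    completion θe x ∈ localPolytope univ :=
  ⟨hx, fun e _ => edgeArg_mem_Icc _ (hx e.1) (hx e.2)⟩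

theorem energy_completion (x : Fin n → ℝ) : energy univ θv θe (completion θe x) =
    (∑ i, θv i * x i) + ∑ e, θe e * edgeArg (θe e) (x e.1) (x e.2) := rfl

theorem energy_le_energy_completion {η : Marginals n} (hη : η ∈ localPolytope univ) :
    energy univ θv θe η ≤ energy univ θv θe (completion θe η.1) := by
  rw [energy_completion]
  exact add_le_add le_rfl (sum_le_sum fun e he => mul_le_mul_edgeArg (hη.2 e he))

theorem eq_completion_of_integral {η : Marginals n} (hη : η ∈ localPolytope univ)
    (hint : ∀ i, η.1 i = 0 ∨ η.1 i = 1) : η = completion θe η.1 := by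
  refine Prod.ext rfl (funext fun e => ?_)
  have hforced := max_zero_eq_min (hint e.1) (hint e.2)
  have harg := edgeArg_mem_Icc (θe e) (hη.1 e.1) (hη.1 e.2)
  have hedge := hη.2 e (mem_univ e)
  exact (le_antisymm hedge.2 (hforced ▸ hedge.1)).trans
    (le_antisymm harg.2 (hforced ▸ harg.1)).symm

theorem completion_mem_extremePoints {x : Fin n → ℝ} (hx : ∀ i, x i = 0 ∨ x i = 1) :
    completion θe x ∈ (localPolytope univ).extremePoints ℝ := by
  have hmem : completion θe x ∈ localPolytope univ :=
    completion_mem fun i => by rcases hx i with h | h <;> simp [h]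
  refine ⟨hmem, fun p hp q hq hseg => ?_⟩
  have hp₁ : p.1 = x := funext fun k =>
    ((isExtreme_localPolytope_slice _ k (hx k)).left_mem_of_mem_openSegment hp hq
      ⟨hmem, rfl⟩ hseg).2
  rw [eq_completion_of_integral hp (hp₁ ▸ hx), hp₁]

theorem energy_le_of_mem_slice {k : Fin n} {c C : ℝ} (hc : c = 0 ∨ c = 1)
    (h : ∀ v ∈ (localPolytope univ).extremePoints ℝ, v.1 k = c → energy univ θv θe v ≤ C)
    {η : Marginals n} (hη : η ∈ localPolytope univ) (hηk : η.1 k = c) :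
    energy univ θv θe η ≤ C := by
  have hface := isExtreme_localPolytope_slice univ k hc
  refine subset_of_extremePoints_subset (A := {η ∈ localPolytope univ | η.1 k = c})
    (isCompact_localPolytope_univ.inter_right (isClosed_eq (by fun_prop) continuous_const))
    ((convex_localPolytope _).inter (convex_hyperplane (nodeCoord k).isLinear c))
    (isClosed_le (LinearMap.continuous_of_finiteDimensional _) continuous_const)
    (convex_halfSpace_le (energy _ θv θe).isLinear C)
    (fun v hv => h v (hface.extremePoints_subset_extremePoints hv) (extremePoints_subset hv).2)
    ⟨hη, hηk⟩

noncomputable def disagreeToHalf (z x : ℝ) : ℝ := if x = z then z else 1 / 2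

noncomputable def halfToRef (z x : ℝ) : ℝ := if x = 1 / 2 then z else x

theorem two_mul_disagreeToHalf_add_halfToRef {z x : ℝ} (hz : z = 0 ∨ z = 1)
    (hx : x ∈ ({0, 1 / 2, 1} : Set ℝ)) :
    2 * disagreeToHalf z x + halfToRef z x = 2 * x + z := by
  unfold disagreeToHalf halfToRef
  rcases hz with rfl | rfl <;> rcases hx with rfl | rfl | rfl <;> norm_num

theorem disagreeToHalf_mem_Icc {z : ℝ} (x : ℝ) (hz : z ∈ Set.Icc (0 : ℝ) 1) :
    disagreeToHalf z x ∈ Set.Icc (0 : ℝ) 1 := by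
  unfold disagreeToHalf
  split_ifs
  exacts [hz, ⟨by norm_num, by norm_num⟩]

theorem disagreeToHalf_one_sub {z : ℝ} (hz : z = 0 ∨ z = 1) :
    disagreeToHalf z (1 - z) = 1 / 2 := by
  unfold disagreeToHalf
  rcases hz with rfl | rfl <;> norm_num

theorem halfToRef_eq_zero_or_eq_one {z x : ℝ} (hz : z = 0 ∨ z = 1)
    (hx : x ∈ ({0, 1 / 2, 1} : Set ℝ)) : halfToRef z x = 0 ∨ halfToRef z x = 1 := by
  unfold halfToRef
  rcases hx with rfl | rfl | rfl <;> norm_num [hz]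

theorem halfToRef_one_sub {z : ℝ} (hz : z = 0 ∨ z = 1) : halfToRef z (1 - z) = 1 - z := by
  unfold halfToRef
  rcases hz with rfl | rfl <;> norm_num

theorem min_rounding {z₁ z₂ x₁ x₂ : ℝ} (hz₁ : z₁ = 0 ∨ z₁ = 1) (hz₂ : z₂ = 0 ∨ z₂ = 1)
    (hx₁ : x₁ ∈ ({0, 1 / 2, 1} : Set ℝ)) (hx₂ : x₂ ∈ ({0, 1 / 2, 1} : Set ℝ)) :
    2 * min x₁ x₂ + min z₁ z₂ ≤ 2 * min (disagreeToHalf z₁ x₁) (disagreeToHalf z₂ x₂)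
      + min (halfToRef z₁ x₁) (halfToRef z₂ x₂) := by
  unfold disagreeToHalf halfToRef
  rcases hz₁ with rfl | rfl <;> rcases hz₂ with rfl | rfl <;>
    rcases hx₁ with rfl | rfl | rfl <;> rcases hx₂ with rfl | rfl | rfl <;> norm_num

theorem max_zero_rounding {z₁ z₂ x₁ x₂ : ℝ} (hz₁ : z₁ = 0 ∨ z₁ = 1) (hz₂ : z₂ = 0 ∨ z₂ = 1)
    (hx₁ : x₁ ∈ ({0, 1 / 2, 1} : Set ℝ)) (hx₂ : x₂ ∈ ({0, 1 / 2, 1} : Set ℝ)) :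
    2 * max 0 (disagreeToHalf z₁ x₁ + disagreeToHalf z₂ x₂ - 1)
      + max 0 (halfToRef z₁ x₁ + halfToRef z₂ x₂ - 1)
      ≤ 2 * max 0 (x₁ + x₂ - 1) + max 0 (z₁ + z₂ - 1) := by
  unfold disagreeToHalf halfToRef
  rcases hz₁ with rfl | rfl <;> rcases hz₂ with rfl | rfl <;>
    rcases hx₁ with rfl | rfl | rfl <;> rcases hx₂ with rfl | rfl | rfl <;> norm_num

theorem mul_edgeArg_rounding (t : ℝ) {z₁ z₂ x₁ x₂ : ℝ} (hz₁ : z₁ = 0 ∨ z₁ = 1)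
    (hz₂ : z₂ = 0 ∨ z₂ = 1) (hx₁ : x₁ ∈ ({0, 1 / 2, 1} : Set ℝ))
    (hx₂ : x₂ ∈ ({0, 1 / 2, 1} : Set ℝ)) :
    2 * (t * edgeArg t x₁ x₂) + t * edgeArg t z₁ z₂
      ≤ 2 * (t * edgeArg t (disagreeToHalf z₁ x₁) (disagreeToHalf z₂ x₂))
        + t * edgeArg t (halfToRef z₁ x₁) (halfToRef z₂ x₂) := by
  unfold edgeArg
  split_ifs with ht
  · nlinarith [mul_le_mul_of_nonneg_left (min_rounding hz₁ hz₂ hx₁ hx₂) ht]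
  · nlinarith [mul_le_mul_of_nonpos_left (max_zero_rounding hz₁ hz₂ hx₁ hx₂) (not_le.1 ht).le]

theorem energy_completion_rounding {z x : Fin n → ℝ} (hz : ∀ i, z i = 0 ∨ z i = 1)
    (hx : ∀ i, x i ∈ ({0, 1 / 2, 1} : Set ℝ)) :
    2 * energy univ θv θe (completion θe x) + energy univ θv θe (completion θe z)
      ≤ 2 * energy univ θv θe (completion θe fun i => disagreeToHalf (z i) (x i))
        + energy univ θv θe (completion θe fun i => halfToRef (z i) (x i)) := by
  have hnodes := sum_congr rfl fun i (_ : i ∈ univ) =>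
    show 2 * (θv i * x i) + θv i * z i
        = 2 * (θv i * disagreeToHalf (z i) (x i)) + θv i * halfToRef (z i) (x i) by
      linear_combination θv i * (two_mul_disagreeToHalf_add_halfToRef (hz i) (hx i)).symm
  have hedges := sum_le_sum fun e (_ : e ∈ univ) =>
    mul_edgeArg_rounding (θe e) (hz e.1) (hz e.2) (hx e.1) (hx e.2)
  simp only [sum_add_distrib, ← mul_sum] at hnodes hedges
  simp only [energy_completion]
  linarith

theorem energy_completion_le_of_coord_eq_one_sub {z x : Fin n → ℝ} {m V β : ℝ}
    (hz : ∀ i, z i = 0 ∨ z i = 1) (hzm : energy univ θv θe (completion θe z) = m)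
    (hmid : ∀ η ∈ localPolytope univ, ∀ k, η.1 k = 1 / 2 → energy univ θv θe η ≤ (m + V) / 2)
    (hsecond : ∀ y : Fin n → ℝ, (∀ i, y i = 0 ∨ y i = 1) → y ≠ z →
      energy univ θv θe (completion θe y) ≤ β)
    (hx : ∀ i, x i ∈ ({0, 1 / 2, 1} : Set ℝ)) {k : Fin n} (hk : x k = 1 - z k) :
    energy univ θv θe (completion θe x) ≤ (V + β) / 2 := by
  have hhalf : energy univ θv θe (completion θe fun i => disagreeToHalf (z i) (x i))
      ≤ (m + V) / 2 := by
    refine hmid _ (completion_mem fun i => disagreeToHalf_mem_Icc _ ?_) k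
      (by simp only [completion, hk, disagreeToHalf_one_sub (hz k)])
    rcases hz i with h | h <;> simp [h]
  have hint : energy univ θv θe (completion θe fun i => halfToRef (z i) (x i)) ≤ β := by
    refine hsecond _ (fun i => halfToRef_eq_zero_or_eq_one (hz i) (hx i)) fun h => ?_
    have hzk := congrFun h k
    simp only [hk, halfToRef_one_sub (hz k)] at hzk
    rcases hz k with h | h <;> rw [h] at hzk <;> norm_num at hzk
  linarith [energy_completion_rounding (θv := θv) (θe := θe) hz hx]

noncomputable def disagreementValue (θv : Fin n → ℝ) (θe : Fin n × Fin n → ℝ)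
    (z : Fin n → ℝ) : ℝ :=
  sSup (energy univ θv θe '' {η ∈ localPolytope univ | ∃ k, η.1 k = 1 - z k})

theorem energy_le_disagreementValue {m : ℝ} {z : Fin n → ℝ}
    (hopt : ∀ η ∈ localPolytope univ, energy univ θv θe η ≤ m)
    {η : Marginals n} (hη : η ∈ localPolytope univ) {k : Fin n} (hk : η.1 k = 1 - z k) :
    energy univ θv θe η ≤ disagreementValue θv θe z :=
  le_csSup ⟨m, by rintro _ ⟨ζ, hζ, rfl⟩; exact hopt ζ hζ.1⟩ ⟨η, ⟨hη, k, hk⟩, rfl⟩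

theorem energy_le_of_coord_eq_half {m : ℝ} {z : Fin n → ℝ}
    (hbalanced : ∀ k : Fin n, ∃ a b : ℝ, ∀ y ∈ Set.Icc (0 : ℝ) 1,
      sSup (energy univ θv θe '' {η ∈ localPolytope univ | η.1 k = y}) = a * y + b)
    (hopt : ∀ η ∈ localPolytope univ, energy univ θv θe η ≤ m)
    (hz : ∀ i, z i ∈ Set.Icc (0 : ℝ) 1) {η : Marginals n} (hη : η ∈ localPolytope univ)
    {k : Fin n} (hk : η.1 k = 1 / 2) :
    energy univ θv θe η ≤ (m + disagreementValue θv θe z) / 2 := by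
  obtain ⟨a, b, hab⟩ := hbalanced k
  exact le_midpoint_of_sSup_slice_affine hab hopt
    (fun y hy => ⟨completion θe fun _ => y, completion_mem fun _ => hy, rfl⟩) (hz k)
    (fun ζ hζ => energy_le_disagreementValue hopt hζ) hη hk

theorem disagreementValue_le [Nonempty (Fin n)] {m β : ℝ} {z : Fin n → ℝ}
    (hz : ∀ i, z i = 0 ∨ z i = 1) (hzm : energy univ θv θe (completion θe z) = m)
    (hhalf : ∀ v ∈ (localPolytope (univ : Finset (Fin n × Fin n))).extremePoints ℝ,
      ∀ i, v.1 i ∈ ({0, 1 / 2, 1} : Set ℝ))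
    (hmid : ∀ η ∈ localPolytope univ, ∀ k, η.1 k = 1 / 2 →
      energy univ θv θe η ≤ (m + disagreementValue θv θe z) / 2)
    (hsecond : ∀ y : Fin n → ℝ, (∀ i, y i = 0 ∨ y i = 1) → y ≠ z →
      energy univ θv θe (completion θe y) ≤ β) :
    disagreementValue θv θe z ≤ β := by
  have hflip : ∀ k, 1 - z k = 0 ∨ 1 - z k = 1 := fun k => by
    rcases hz k with h | h <;> simp [h]
  have hne : (energy univ θv θe '' {η ∈ localPolytope univ | ∃ k, η.1 k = 1 - z k}).Nonempty :=
    ⟨_, completion θe (fun k => 1 - z k),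
      ⟨completion_mem fun k => by rcases hflip k with h | h <;> simp [h],
        Classical.arbitrary _, rfl⟩, rfl⟩
  have hfix : disagreementValue θv θe z ≤ (disagreementValue θv θe z + β) / 2 := by
    refine csSup_le hne ?_
    rintro _ ⟨η, ⟨hη, k, hk⟩, rfl⟩
    refine energy_le_of_mem_slice (hflip k) (fun v hv hvk => ?_) hη hk
    exact (energy_le_energy_completion hv.1).trans
      (energy_completion_le_of_coord_eq_one_sub hz hzm hmid hsecond (hhalf v hv) hvk)
  linarith

theorem stmt_8_general (n : ℕ) (E : Finset (Fin n × Fin n))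
    (θv : Fin n → ℝ) (θe : Fin n × Fin n → ℝ)
    (f : (Fin n → ℝ) × (Fin n × Fin n → ℝ) → ℝ)
    (hf : ∀ η, f η = (∑ i, θv i * η.1 i) + ∑ e ∈ E, θe e * η.2 e)
    (𝕃 : Set ((Fin n → ℝ) × (Fin n × Fin n → ℝ)))
    (h𝕃 : 𝕃 = {η | (∀ i, 0 ≤ η.1 i ∧ η.1 i ≤ 1) ∧
      ∀ e ∈ E, max 0 (η.1 e.1 + η.1 e.2 - 1) ≤ η.2 e ∧ η.2 e ≤ min (η.1 e.1) (η.1 e.2)})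
    -- all vertices of the local polytope are half-integral
    (hhalf : ∀ η ∈ Set.extremePoints ℝ 𝕃,
      (∀ i, η.1 i ∈ ({0, 1/2, 1} : Set ℝ)) ∧ ∀ e ∈ E, η.2 e ∈ ({0, 1/2, 1} : Set ℝ))
    -- balancedness: the constrained optimum F^i(z) is linear in z on [0,1]
    (hbalanced : ∀ i : Fin n, ∃ a b : ℝ, ∀ z ∈ Set.Icc (0:ℝ) 1,
      sSup (f '' {η ∈ 𝕃 | η.1 i = z}) = a * z + b)
    (α m : ℝ)
    (η₁ : (Fin n → ℝ) × (Fin n × Fin n → ℝ))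
    (hη₁ : η₁ ∈ Set.extremePoints ℝ 𝕃) (hη₁int : ∀ i, η₁.1 i = 0 ∨ η₁.1 i = 1)
    (hη₁val : f η₁ = m)
    (hopt : ∀ η ∈ 𝕃, f η ≤ m)
    -- every other integral vertex has value at most m − α
    (hsecond : ∀ η ∈ Set.extremePoints ℝ 𝕃,
      (∀ i, η.1 i = 0 ∨ η.1 i = 1) → η ≠ η₁ → f η ≤ m - α) :
    ∀ η ∈ Set.extremePoints ℝ 𝕃, (∃ i, ¬(η.1 i = 0 ∨ η.1 i = 1)) →
      f η ≤ m - α / 2 := by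
  rintro η hη ⟨i, hi⟩
  obtain rfl : 𝕃 = localPolytope E := h𝕃
  obtain rfl : f = energy E θv θe := funext hf
  obtain rfl : E = univ := by
    by_contra hE
    simp [extremePoints_localPolytope_eq_empty hE] at hη₁
  have : Nonempty (Fin n) := ⟨i⟩
  have hzm : energy univ θv θe (completion θe η₁.1) = m := by
    rw [← eq_completion_of_integral hη₁.1 hη₁int, hη₁val]
  have hmid := fun ζ (hζ : ζ ∈ localPolytope univ) k (hk : ζ.1 k = 1 / 2) =>
    energy_le_of_coord_eq_half hbalanced hopt hη₁.1.1 hζ hk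
  have hV : disagreementValue θv θe η₁.1 ≤ m - α :=
    disagreementValue_le hη₁int hzm (fun v hv => (hhalf v hv).1) hmid
      fun y hy hyη₁ => hsecond _ (completion_mem_extremePoints hy) hy
        fun h => hyη₁ (congrArg Prod.fst h)
  have hηi : η.1 i = 1 / 2 := by
    rcases (hhalf η hη).1 i with h | h | h
    exacts [absurd (Or.inl h) hi, h, absurd (Or.inr h) hi]
  linarith [hmid η hη.1 i hηi]

/-- Balanced binary pairwise models with a unique integral optimum are `(α/2)`-tight:
every fractional vertex of the local polytope has value at most `m − α/2`.
Balancedness is used through the linearity of the constrained optimum `F^i(z)`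
(Weller et al. 2016, Theorem 6), taken here as a hypothesis. -/
theorem stmt_8 (n : ℕ) (E : Finset (Fin n × Fin n))
    (θv : Fin n → ℝ) (θe : Fin n × Fin n → ℝ)
    (f : (Fin n → ℝ) × (Fin n × Fin n → ℝ) → ℝ)
    (hf : ∀ η, f η = (∑ i, θv i * η.1 i) + ∑ e ∈ E, θe e * η.2 e)
    (𝕃 : Set ((Fin n → ℝ) × (Fin n × Fin n → ℝ)))
    (h𝕃 : 𝕃 = {η | (∀ i, 0 ≤ η.1 i ∧ η.1 i ≤ 1) ∧
      ∀ e ∈ E, max 0 (η.1 e.1 + η.1 e.2 - 1) ≤ η.2 e ∧ η.2 e ≤ min (η.1 e.1) (η.1 e.2)})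
    -- all vertices of the local polytope are half-integral
    (hhalf : ∀ η ∈ Set.extremePoints ℝ 𝕃,
      (∀ i, η.1 i ∈ ({0, 1/2, 1} : Set ℝ)) ∧ ∀ e ∈ E, η.2 e ∈ ({0, 1/2, 1} : Set ℝ))
    -- balancedness: the constrained optimum F^i(z) is linear in z on [0,1]
    (hbalanced : ∀ i : Fin n, ∃ a b : ℝ, ∀ z ∈ Set.Icc (0:ℝ) 1,
      sSup (f '' {η ∈ 𝕃 | η.1 i = z}) = a * z + b)
    (α m : ℝ) (hα : 0 < α)
    (η₁ : (Fin n → ℝ) × (Fin n × Fin n → ℝ))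
    (hη₁ : η₁ ∈ Set.extremePoints ℝ 𝕃) (hη₁int : ∀ i, η₁.1 i = 0 ∨ η₁.1 i = 1)
    (hη₁val : f η₁ = m)
    (hopt : ∀ η ∈ 𝕃, f η ≤ m)
    -- every other integral vertex has value at most m − α
    (hsecond : ∀ η ∈ Set.extremePoints ℝ 𝕃,
      (∀ i, η.1 i = 0 ∨ η.1 i = 1) → η ≠ η₁ → f η ≤ m - α) :
    ∀ η ∈ Set.extremePoints ℝ 𝕃, (∃ i, ¬(η.1 i = 0 ∨ η.1 i = 1)) →
      f η ≤ m - α / 2 :=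
  stmt_8_general n E θv θe f hf 𝕃 h𝕃 hhalf hbalanced α m η₁ hη₁ hη₁int hη₁val hopt hsecond
end

section
/- In a binary pairwise model, if variable i satisfies θ̄_i ≥ −Σ_{j∈N_i⁻} θ̄_{ij} + β for β > 0, then at any vertex of the local polytope with η_i = 1/2, changing η_i to 1 (and re-optimizing edge terms adjacent to i) increases the objective by at least β/2. -/
/-- If `θ̄_i ≥ −Σ_{j∈N_i⁻} θ̄_{ij} + β`, then at a half-integral vertex with
`η_i = 1/2`, changing `η_i` to `1` (re-optimizing edge terms) increases the
objective by at least `β/2`. The change is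
`Δf = (1/2)(θ̄_i + Σ_{j∈N_i⁺, η_j=1} θ̄_{ij} + Σ_{j∈N_i⁻, η_j∈{1/2,1}} θ̄_{ij})`. -/
theorem stmt_11 {ι : Type*} [DecidableEq ι] (N : Finset ι) (θi : ℝ) (w : ι → ℝ)
    (η : ι → ℝ) (hη : ∀ j ∈ N, η j = 0 ∨ η j = 1/2 ∨ η j = 1)
    (β : ℝ) (hβ : 0 < β)
    (hcond : θi ≥ -(∑ j ∈ N.filter (fun j => w j < 0), w j) + β)
    (Δf : ℝ)
    (hΔf : Δf = (1/2) * (θi + (∑ j ∈ N.filter (fun j => 0 < w j ∧ η j = 1), w j)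
      + ∑ j ∈ N.filter (fun j => w j < 0 ∧ (η j = 1/2 ∨ η j = 1)), w j)) :
    Δf ≥ β / 2 := by
  have h1 : (0:ℝ) ≤ ∑ j ∈ N.filter (fun j => 0 < w j ∧ η j = 1), w j :=
    Finset.sum_nonneg (fun j hj => le_of_lt (Finset.mem_filter.mp hj).2.1)
  have h2 : (∑ j ∈ N.filter (fun j => w j < 0), w j)
      ≤ ∑ j ∈ N.filter (fun j => w j < 0 ∧ (η j = 1/2 ∨ η j = 1)), w j := by
    have hsub : N.filter (fun j => w j < 0 ∧ (η j = 1/2 ∨ η j = 1))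
        ⊆ N.filter (fun j => w j < 0) := by
      intro j hj
      simp only [Finset.mem_filter] at *
      exact ⟨hj.1, hj.2.1⟩
    have := Finset.sum_le_sum_of_subset_of_nonneg (f := fun j => -w j) hsub
      (fun j hj _ => by
        show (0:ℝ) ≤ -w j
        have := (Finset.mem_filter.mp hj).2
        linarith)
    simp only [Finset.sum_neg_distrib] at this
    linarith
  linarith
end

section
/- Every vertex of the single-edge local polytope {(η_i, η_j, η_{ij}) : 0 ≤ η_i, η_j ≤ 1, max(0, η_i + η_j − 1) ≤ η_{ij} ≤ min(η_i, η_j)} has all coordinates in {0, 1/2, 1}. -/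
/-!
The polytope is the convex hull of the four integral points `(0,0,0), (1,0,0), (0,1,0), (1,1,1)`:
the point `(x, y, z)` is their convex combination with weights `1 - x - y + z, x - z, y - z, z`,
and these weights are nonnegative precisely by the defining inequalities. Hence every vertex is
one of these four points, so it is even integral.
-/

def edgePolytope : Set (ℝ × ℝ × ℝ) :=
  {p | 0 ≤ p.1 ∧ p.1 ≤ 1 ∧ 0 ≤ p.2.1 ∧ p.2.1 ≤ 1 ∧
    max 0 (p.1 + p.2.1 - 1) ≤ p.2.2 ∧ p.2.2 ≤ min p.1 p.2.1}

def edgePolytopeVertices : Set (ℝ × ℝ × ℝ) := {(0, 0, 0), (1, 0, 0), (0, 1, 0), (1, 1, 1)}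

lemma mem_edgePolytope {x y z : ℝ} :
    (x, y, z) ∈ edgePolytope ↔
      0 ≤ x ∧ x ≤ 1 ∧ 0 ≤ y ∧ y ≤ 1 ∧ 0 ≤ z ∧ x + y - 1 ≤ z ∧ z ≤ x ∧ z ≤ y := by
  simp only [edgePolytope, Set.mem_ofPred_eq, max_le_iff, le_min_iff, and_assoc]

lemma convex_edgePolytope : Convex ℝ edgePolytope := by
  rintro ⟨x, y, z⟩ hp ⟨x', y', z'⟩ hq a b ha hb hab
  rw [mem_edgePolytope] at hp hq
  simp only [Prod.smul_mk, Prod.mk_add_mk, smul_eq_mul, mem_edgePolytope]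
  obtain ⟨hx0, hx1, hy0, hy1, hz0, hzxy, hzx, hzy⟩ := hp
  obtain ⟨hx0', hx1', hy0', hy1', hz0', hzxy', hzx', hzy'⟩ := hq
  refine ⟨?_, ?_, ?_, ?_, ?_, ?_, ?_, ?_⟩ <;> nlinarith

lemma edgePolytopeVertices_subset : edgePolytopeVertices ⊆ edgePolytope := by
  simp only [edgePolytopeVertices, Set.insert_subset_iff, Set.singleton_subset_iff,
    mem_edgePolytope]
  norm_num

lemma edgePolytope_subset_convexHull : edgePolytope ⊆ convexHull ℝ edgePolytopeVertices := by
  rintro ⟨x, y, z⟩ hp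
  rw [mem_edgePolytope] at hp
  obtain ⟨-, -, -, -, hz0, hzxy, hzx, hzy⟩ := hp
  have hcomb := (convex_convexHull ℝ edgePolytopeVertices).sum_mem (t := Finset.univ)
    (w := ![1 - x - y + z, x - z, y - z, z]) (z := ![(0, 0, 0), (1, 0, 0), (0, 1, 0), (1, 1, 1)])
    (by intro i _; fin_cases i <;> dsimp <;> linarith)
    (by rw [Fin.sum_univ_four]; dsimp; ring)
    (by intro i _; apply subset_convexHull; fin_cases i <;> simp [edgePolytopeVertices])
  convert hcomb using 1
  simp [Fin.sum_univ_four]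

lemma edgePolytope_eq_convexHull : edgePolytope = convexHull ℝ edgePolytopeVertices :=
  edgePolytope_subset_convexHull.antisymm
    (convexHull_min edgePolytopeVertices_subset convex_edgePolytope)

lemma extremePoints_edgePolytope_subset :
    Set.extremePoints ℝ edgePolytope ⊆ edgePolytopeVertices := by
  rw [edgePolytope_eq_convexHull]
  exact extremePoints_convexHull_subset

/-- Every vertex (extreme point) of the single-edge local polytope is half-integral. -/
theorem stmt_14 (P : Set (ℝ × ℝ × ℝ))
    (hP : P = {p | 0 ≤ p.1 ∧ p.1 ≤ 1 ∧ 0 ≤ p.2.1 ∧ p.2.1 ≤ 1 ∧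
      max 0 (p.1 + p.2.1 - 1) ≤ p.2.2 ∧ p.2.2 ≤ min p.1 p.2.1}) :
    ∀ v ∈ Set.extremePoints ℝ P,
      v.1 ∈ ({0, 1/2, 1} : Set ℝ) ∧ v.2.1 ∈ ({0, 1/2, 1} : Set ℝ) ∧
      v.2.2 ∈ ({0, 1/2, 1} : Set ℝ) := by
  subst hP
  intro v hv
  rcases extremePoints_edgePolytope_subset hv with rfl | rfl | rfl | rfl <;> simp
end
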